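/- Let a, b be real numbers with b < 0 and a > b. Define f(x) := (−b x² + (4b + 2a)x − 6(a + b))eˣ + a x² + (4a + 2b)x + 6(a + b). Then f(x) > 0 for all x > 0. -/

import Mathlib

/-!
`f a b x` is linear in `(a, b)`, and the region `b < 0`, `b < a` is the open cone spanned by
`(1, 0)` and `(-1, -1)`, so `f a b = (a - b) • f 1 0 + (-b) • f (-1) (-1)` and it suffices to show
that these two extreme functions are positive on `x > 0`.

* `f (-1) (-1) x = (x² - 6x + 12) eˣ - (x² + 6x + 12)` compares `exp` with its `[2/2]` Padé
  approximant; its Taylor coefficients are `(n - 3)(n - 4) / n!`, and already the Taylor polynomial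
  of degree 5 gives the bound `x⁵ (x² - x + 2) / 120 > 0`.
* `e⁻ˣ f 1 0 x = 2x - 6 + (x² + 4x + 6) e⁻ˣ` vanishes at `0` and has derivative
  `e⁻ˣ (2eˣ - x² - 2x - 2) > 0`.
-/

noncomputable def f (a b x : ℝ) : ℝ :=
  (-b * x^2 + (4*b + 2*a) * x - 6*(a + b)) * Real.exp x
    + a * x^2 + (4*a + 2*b) * x + 6*(a + b)

open Real Set Finset Nat

lemma f_eq_linear_combination (a b x : ℝ) :
    f a b x = (a - b) * f 1 0 x + -b * f (-1) (-1) x := by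
  simp only [f]
  ring

lemma one_add_add_sq_div_two_lt_exp {x : ℝ} (hx : 0 < x) : 1 + x + x ^ 2 / 2 < exp x :=
  calc 1 + x + x ^ 2 / 2 < ∑ i ∈ range 4, x ^ i / i ! := by
        simp only [sum_range_succ, sum_range_zero, factorial]
        push_cast
        linarith [pow_pos hx 3]
    _ ≤ exp x := sum_le_exp_of_nonneg hx.le 4

lemma f_neg_one_neg_one_pos {x : ℝ} (hx : 0 < x) : 0 < f (-1) (-1) x := by
  have hq : 0 < x ^ 2 - 6 * x + 12 := by nlinarith [sq_nonneg (x - 3)]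
  have hr : 0 < x ^ 2 - x + 2 := by nlinarith [sq_nonneg (x - 1)]
  calc 0 < x ^ 5 * (x ^ 2 - x + 2) / 120 := by positivity
    _ = (x ^ 2 - 6 * x + 12) * (∑ i ∈ range 6, x ^ i / i !) - (x ^ 2 + 6 * x + 12) := by
        simp only [sum_range_succ, sum_range_zero, factorial]
        push_cast
        ring
    _ ≤ (x ^ 2 - 6 * x + 12) * exp x - (x ^ 2 + 6 * x + 12) := by
        gcongr
        exact sum_le_exp_of_nonneg hx.le 6
    _ = f (-1) (-1) x := by
        simp only [f]
        ring

lemma f_one_zero_pos {x : ℝ} (hx : 0 < x) : 0 < f 1 0 x := by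
  let k : ℝ → ℝ := fun y ↦ 2 * y - 6 + (y ^ 2 + 4 * y + 6) * exp (-y)
  have hk' (y : ℝ) : HasDerivAt k (2 - (y ^ 2 + 2 * y + 2) * exp (-y)) y := by
    have := (((hasDerivAt_id y).const_mul 2).sub_const 6).add
      ((((hasDerivAt_pow 2 y).add ((hasDerivAt_id y).const_mul 4)).add_const 6).mul
        (hasDerivAt_neg y).exp)
    exact this.congr_deriv (by simp only [id_eq, Pi.add_apply]; ring)
  have hk'_pos {y : ℝ} (hy : 0 < y) : 0 < 2 - (y ^ 2 + 2 * y + 2) * exp (-y) := by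
    rw [exp_neg, ← div_eq_mul_inv, sub_pos, div_lt_iff₀ (exp_pos y)]
    linarith [one_add_add_sq_div_two_lt_exp hy]
  have hk : StrictMonoOn k (Ici 0) := by
    refine strictMonoOn_of_deriv_pos (convex_Ici 0) (by fun_prop) fun y hy ↦ ?_
    rw [interior_Ici] at hy
    rw [(hk' y).deriv]
    exact hk'_pos hy
  have hkx : 0 < k x := by simpa [k] using hk self_mem_Ici hx.le hx
  have hfk : f 1 0 x = exp x * k x := by
    simp only [f, k, mul_add, exp_neg]
    field_simp
    ring
  rw [hfk]
  positivity

theorem f_pos (a b : ℝ) (hb : b < 0) (hab : b < a) :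
    ∀ x : ℝ, 0 < x → 0 < f a b x := by
  intro x hx
  have hab' : 0 < a - b := sub_pos.mpr hab
  have hb' : 0 < -b := neg_pos.mpr hb
  have h₁ := f_one_zero_pos hx
  have h₂ := f_neg_one_neg_one_pos hx
  rw [f_eq_linear_combination]
  positivity
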